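/- Let l ∈ (0, 1/6), r = 1 − 2l, c = l·r², and let λ and M be as defined. Then for every (x,y,z) ∈ [0,1]³, one has (x,y,z) ∈ M if and only if λ(x) = y·z, λ(y) = x·z, and λ(z) = x·y. -/

import Mathlib

open Set

/-- The piecewise function `λ`: `(1−2x)²` on `[0, l)`, `c/x` on `[l, r)` and `x(1−x)/2` on
`[r, 1]`, where `r = 1 − 2l` and `c = l·r²`. -/
noncomputable def lam (l : ℝ) (x : ℝ) : ℝ :=
  if x < l then (1 - 2*x)^2
  else if x < 1 - 2*l then (l * (1 - 2*l)^2) / x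
  else x * (1 - x) / 2

/-- The set `M ⊆ [0,1]³`: the union of the three segments
`Mx = {(t, 1−2t, 1−2t) : 0 ≤ t ≤ l}`, `My = {(1−2t, t, 1−2t) : 0 ≤ t ≤ l}`,
`Mz = {(1−2t, 1−2t, t) : 0 ≤ t ≤ l}` and the two-dimensional piece
`M₂ = {(x,y,z) : l ≤ x,y,z ≤ 1−2l, xyz = l(1−2l)²}`. -/
def Mset (l : ℝ) : Set (ℝ × ℝ × ℝ) :=
  {p | ∃ t, 0 ≤ t ∧ t ≤ l ∧
    (p = (t, 1 - 2*t, 1 - 2*t) ∨ p = (1 - 2*t, t, 1 - 2*t) ∨ p = (1 - 2*t, 1 - 2*t, t))} ∪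
  {p | l ≤ p.1 ∧ p.1 ≤ 1 - 2*l ∧ l ≤ p.2.1 ∧ p.2.1 ≤ 1 - 2*l ∧ l ≤ p.2.2 ∧ p.2.2 ≤ 1 - 2*l ∧
    p.1 * p.2.1 * p.2.2 = l * (1 - 2*l)^2}

/-!
Multiplying each equation by the corresponding coordinate gives
`x·λ(x) = y·λ(y) = z·λ(z) = xyz`. The function `t·λ(t)` equals `c` exactly on `[l, r]`, and
elsewhere it equals `g(s) = s(1−2s)²` with `s = t` on `[0, l)` and `s = (1−t)/2` on `(r, 1]`.
Since `g` is strictly increasing on `(-∞, 1/6]`, `g < c` off `[l, r]`; so either all three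
coordinates lie in `[l, r]` (the piece `M₂`), or they share one parameter `s ∈ [0, l)` and each
is `s` or `1 − 2s`, in which case the equations force exactly one of them to be `s`.
-/

theorem strictMonoOn_mul_one_sub_two_mul_sq :
    StrictMonoOn (fun s : ℝ => s * (1 - 2 * s) ^ 2) (Iic (1 / 6)) := by
  rintro a - b (hb : b ≤ 1 / 6) hab
  have hQ : 0 < (1 - 2 * a - 2 * b) ^ 2 - 4 * a * b := by
    have h₁ : 0 < 1 - (a + b) := by linarith
    have h₂ : 0 < 1 - 3 * (a + b) := by linarith
    nlinarith [sq_nonneg (a - b), mul_pos h₁ h₂]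
  have hdiff : b * (1 - 2 * b) ^ 2 - a * (1 - 2 * a) ^ 2 =
      (b - a) * ((1 - 2 * a - 2 * b) ^ 2 - 4 * a * b) := by ring
  have := mul_pos (sub_pos.2 hab) hQ
  simp only
  linarith

theorem eq_or_eq_or_eq_of_mem_pair {F : ℝ → ℝ} {s u x y z : ℝ} (hs : 0 ≤ s) (hsu : s < u)
    (hFs : F s = u * u) (hFu : F u = s * u)
    (hx : x = s ∨ x = u) (hy : y = s ∨ y = u) (hz : z = s ∨ z = u)
    (ex : F x = y * z) (ey : F y = x * z) (ez : F z = x * y) :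
    (x, y, z) = (s, u, u) ∨ (x, y, z) = (u, s, u) ∨ (x, y, z) = (u, u, s) := by
  -- every other pattern makes one of the equations read `u * u = s * u` or `u * u = s * s`
  have h₁ : u * u ≠ s * u := by nlinarith
  have h₂ : u * u ≠ s * s := by nlinarith
  rcases hx with rfl | rfl <;> rcases hy with rfl | rfl <;> rcases hz with rfl | rfl <;>
    simp_all [mul_comm]

section lam

variable {l t : ℝ}

theorem lam_of_lt (h : t < l) : lam l t = (1 - 2 * t) ^ 2 := if_pos h

theorem lam_of_mem_Icc (h : t ∈ Icc l (1 - 2 * l)) :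
    lam l t = l * (1 - 2 * l) ^ 2 / t := by
  obtain ⟨h₁, h₂⟩ := h
  rw [lam, if_neg h₁.not_gt]
  rcases h₂.lt_or_eq with h₂ | rfl
  · rw [if_pos h₂]
  · rw [if_neg (lt_irrefl _)]
    field_simp
    ring

theorem lam_of_one_sub_two_mul_le (hl : 3 * l ≤ 1) (h : 1 - 2 * l ≤ t) :
    lam l t = t * (1 - t) / 2 := by
  rw [lam, if_neg (by linarith), if_neg h.not_gt]

theorem lam_segment (hl0 : 0 < l) (hl : 3 * l ≤ 1) (ht : t ≤ l) :
    lam l t = (1 - 2 * t) * (1 - 2 * t) ∧ lam l (1 - 2 * t) = t * (1 - 2 * t) := by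
  refine ⟨?_, ?_⟩
  · rcases ht.lt_or_eq with ht | rfl
    · rw [lam_of_lt ht, sq]
    · rw [lam_of_mem_Icc ⟨le_rfl, by linarith⟩]
      field_simp
  · rw [lam_of_one_sub_two_mul_le hl (by linarith)]
    ring

theorem lam_eq_mul_of_mem_Icc {y z : ℝ} (hl : 0 < l) (ht : t ∈ Icc l (1 - 2 * l))
    (h : t * y * z = l * (1 - 2 * l) ^ 2) : lam l t = y * z := by
  rw [lam_of_mem_Icc ht, div_eq_iff (hl.trans_le ht.1).ne', ← h]
  ring

theorem exists_mul_lam_eq (hl : 3 * l ≤ 1) (ht : t ∈ Icc 0 1) (h : t ∉ Icc l (1 - 2 * l)) :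
    ∃ s ∈ Ico 0 l, (t = s ∨ t = 1 - 2 * s) ∧ t * lam l t = s * (1 - 2 * s) ^ 2 := by
  rw [mem_Icc, not_and_or, not_le, not_le] at h
  rcases h with h | h
  · exact ⟨t, ⟨ht.1, h⟩, Or.inl rfl, by rw [lam_of_lt h]⟩
  · refine ⟨(1 - t) / 2, ⟨by linarith [ht.2], by linarith⟩, Or.inr (by ring), ?_⟩
    rw [lam_of_one_sub_two_mul_le hl h.le]
    ring

theorem mul_lam_eq_iff (hl0 : 0 < l) (hl : l ≤ 1 / 6) (ht : t ∈ Icc 0 1) :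
    t * lam l t = l * (1 - 2 * l) ^ 2 ↔ t ∈ Icc l (1 - 2 * l) := by
  refine ⟨fun h => ?_, fun h => ?_⟩
  · by_contra hnot
    obtain ⟨s, ⟨-, hsl⟩, -, hs⟩ := exists_mul_lam_eq (by linarith) ht hnot
    have := strictMonoOn_mul_one_sub_two_mul_sq (by linarith : s ≤ 1 / 6) hl hsl
    linarith
  · rw [lam_of_mem_Icc h, mul_div_cancel₀ _ (hl0.trans_le h.1).ne']

theorem lam_eq_of_mem_Mset {x y z : ℝ} (hl0 : 0 < l) (hl : 3 * l ≤ 1)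
    (h : (x, y, z) ∈ Mset l) : lam l x = y * z ∧ lam l y = x * z ∧ lam l z = x * y := by
  rcases h with ⟨t, -, ht, h⟩ | ⟨hx, hx', hy, hy', hz, hz', hP⟩
  · obtain ⟨hs, hu⟩ := lam_segment hl0 hl ht
    have hu' : lam l (1 - 2 * t) = (1 - 2 * t) * t := hu.trans (mul_comm _ _)
    simp only [Prod.mk.injEq] at h
    rcases h with ⟨rfl, rfl, rfl⟩ | ⟨rfl, rfl, rfl⟩ | ⟨rfl, rfl, rfl⟩
    exacts [⟨hs, hu, hu⟩, ⟨hu, hs, hu'⟩, ⟨hu', hu', hs⟩]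
  · exact ⟨lam_eq_mul_of_mem_Icc hl0 ⟨hx, hx'⟩ hP,
      lam_eq_mul_of_mem_Icc hl0 ⟨hy, hy'⟩ (by linear_combination hP),
      lam_eq_mul_of_mem_Icc hl0 ⟨hz, hz'⟩ (by linear_combination hP)⟩

theorem exists_segment_of_lam_eq {x y z : ℝ} (hl0 : 0 < l) (hl : l ≤ 1 / 6)
    (hx : x ∈ Icc 0 1) (hy : y ∈ Icc 0 1) (hz : z ∈ Icc 0 1)
    (ex : lam l x = y * z) (ey : lam l y = x * z) (ez : lam l z = x * y)
    (hP : x * y * z ≠ l * (1 - 2 * l) ^ 2) :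
    ∃ t, 0 ≤ t ∧ t ≤ l ∧ ((x, y, z) = (t, 1 - 2 * t, 1 - 2 * t) ∨
      (x, y, z) = (1 - 2 * t, t, 1 - 2 * t) ∨ (x, y, z) = (1 - 2 * t, 1 - 2 * t, t)) := by
  have hl3 : 3 * l ≤ 1 := by linarith
  have param {w} (hw : w ∈ Icc 0 1) (fw : w * lam l w = x * y * z) :
      ∃ s ∈ Ico 0 l, (w = s ∨ w = 1 - 2 * s) ∧ s * (1 - 2 * s) ^ 2 = x * y * z := by
    have hoff : w ∉ Icc l (1 - 2 * l) := fun h => hP (fw ▸ (mul_lam_eq_iff hl0 hl hw).2 h)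
    obtain ⟨s, hs, hws, gs⟩ := exists_mul_lam_eq hl3 hw hoff
    exact ⟨s, hs, hws, gs ▸ fw⟩
  obtain ⟨a, ha, hxa, ga⟩ := param hx (by rw [ex]; ring)
  obtain ⟨b, hb, hyb, gb⟩ := param hy (by rw [ey]; ring)
  obtain ⟨c, hc, hzc, gc⟩ := param hz (by rw [ez]; ring)
  have hsub {s} (hs : s ∈ Ico 0 l) : s ∈ Iic (1 / 6 : ℝ) := by
    rw [mem_Iic]; linarith [hs.2]
  have hinj := strictMonoOn_mul_one_sub_two_mul_sq.injOn
  obtain rfl : b = a := hinj (hsub hb) (hsub ha) (gb.trans ga.symm)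
  obtain rfl : c = b := hinj (hsub hc) (hsub hb) (gc.trans gb.symm)
  obtain ⟨hs, hu⟩ := lam_segment hl0 hl3 hc.2.le
  exact ⟨c, hc.1, hc.2.le, eq_or_eq_or_eq_of_mem_pair hc.1 (by linarith [hc.2])
    hs hu hxa hyb hzc ex ey ez⟩

end lam

theorem mem_Mset_iff (l : ℝ) (hl : l ∈ Set.Ioo (0 : ℝ) (1/6)) (x y z : ℝ)
    (hx : x ∈ Set.Icc (0 : ℝ) 1) (hy : y ∈ Set.Icc (0 : ℝ) 1) (hz : z ∈ Set.Icc (0 : ℝ) 1) :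
    (x, y, z) ∈ Mset l ↔ lam l x = y * z ∧ lam l y = x * z ∧ lam l z = x * y := by
  obtain ⟨hl0, hl6⟩ := hl
  refine ⟨lam_eq_of_mem_Mset hl0 (by linarith), fun ⟨ex, ey, ez⟩ => ?_⟩
  by_cases hP : x * y * z = l * (1 - 2 * l) ^ 2
  · have hmem {w} (hw : w ∈ Icc 0 1) (fw : w * lam l w = x * y * z) : w ∈ Icc l (1 - 2 * l) :=
      (mul_lam_eq_iff hl0 hl6.le hw).1 (fw.trans hP)
    obtain ⟨hx, hx'⟩ := hmem hx (by rw [ex]; ring)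
    obtain ⟨hy, hy'⟩ := hmem hy (by rw [ey]; ring)
    obtain ⟨hz, hz'⟩ := hmem hz (by rw [ez]; ring)
    exact Or.inr ⟨hx, hx', hy, hy', hz, hz', hP⟩
  · exact Or.inl (exists_segment_of_lam_eq hl0 hl6.le hx hy hz ex ey ez hP)
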